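/- arXiv:2410.04903 — 3 statements merged into one kernel-verified Lean document; each statement's English description precedes it below -/
import Mathlib

section
/- Let G be a unicyclic graph with cycle C_\gamma on vertices v_1,...,v_\gamma, where T_i is the tree attached to v_i (so the trees are pairwise disjoint and G is obtained from the disjoint union of the T_i by adding the cycle edges). Then W(G) = (n - \gamma/2) * floor(\gamma^2/4) + (\gamma - 1) * \sum_{i=1}^{\gamma} \alpha_i + \sum_{i=1}^{\gamma} W(T_i) + \sum_{1 \le i < j \le \gamma} (\ell_i \alpha_j + \ell_i \ell_j d_{C_\gamma}(v_i, v_j) + \ell_j \alpha_i), where \alpha_i = D_{T_i}(v_i), \ell_i = |V(T_i)| - 1, and n = |V(G)|. -/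
open SimpleGraph Finset

/-- The Wiener index of a graph: the sum of distances over all unordered pairs of vertices. -/
noncomputable def wienerIndex {V : Type*} [Fintype V] [DecidableEq V] (G : SimpleGraph V) : ℕ :=
  ∑ p : Sym2 V, Sym2.lift ⟨fun u v => G.dist u v, fun u v => SimpleGraph.dist_comm⟩ p

/-- `G` is the unicyclic graph `C_γ(T_1,…,T_γ)`: every vertex `x` belongs to the tree attached
at the cycle position `c x`, `v i` is the cycle vertex (root) at position `i`, the subgraph
induced on each position class is a tree, and the only edges between distinct classes are the
cycle edges joining consecutive roots. -/
def CycleAttach {V : Type*} (G : SimpleGraph V) (γ : ℕ) (c : V → ℕ) (v : ℕ → V) : Prop :=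
  (∀ x, c x < γ) ∧ (∀ i, i < γ → c (v i) = i) ∧
  (∀ i, i < γ → (G.induce {x | c x = i}).IsTree) ∧
  (∀ x y, c x ≠ c y →
    (G.Adj x y ↔ x = v (c x) ∧ y = v (c y) ∧
      ((c x + 1) % γ = c y ∨ (c y + 1) % γ = c x)))

/-! A shortest path between vertices of different trees leaves its tree at the root, follows the
shorter arc of the cycle and enters the other tree at its root, while inside a tree distances are
tree distances. This candidate distance is realised by a walk and changes by at most one along
every edge, so it is the distance of `G`. Summing it over ordered pairs of trees expresses `W(G)`
through the `W(T_i)`, `α_i`, `|V(T_i)|` and cycle distances; the stated form follows by writing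
`|V(T_i)| = ℓ_i + 1` and using that every row of the cycle-distance matrix sums to `⌊γ²/4⌋`. -/

def cycleDist (γ i j : ℕ) : ℕ := min (Nat.dist i j) (γ - Nat.dist i j)

lemma cycleDist_comm (γ i j : ℕ) : cycleDist γ i j = cycleDist γ j i := by
  rw [cycleDist, cycleDist, Nat.dist_comm]

lemma cycleDist_self (γ i : ℕ) : cycleDist γ i i = 0 := by simp [cycleDist]

lemma cycleDist_triangle {γ i j k : ℕ} (hi : i < γ) (hj : j < γ) (hk : k < γ) :
    cycleDist γ i k ≤ cycleDist γ i j + cycleDist γ j k := by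
  unfold cycleDist Nat.dist; omega

lemma cycleDist_eq_min_sub {γ i j : ℕ} (h : i ≤ j) :
    cycleDist γ i j = min (j - i) (γ - (j - i)) := by
  unfold cycleDist Nat.dist; omega

lemma cycleDist_succ_mod_le_one {γ i : ℕ} (hi : i < γ) : cycleDist γ i ((i + 1) % γ) ≤ 1 := by
  rcases Nat.lt_or_ge (i + 1) γ with h | h
  · rw [Nat.mod_eq_of_lt h]; unfold cycleDist Nat.dist; omega
  · rw [show i + 1 = γ by omega, Nat.mod_self]; unfold cycleDist Nat.dist; omega

lemma sum_range_min_sub (γ : ℕ) : ∑ t ∈ range γ, min t (γ - t) = γ ^ 2 / 4 := by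
  induction γ using Nat.twoStepInduction with
  | zero => rfl
  | one => rfl
  | more γ ih _ =>
    have hshift : ∀ t ∈ range (γ + 1), min (t + 1) (γ + 2 - (t + 1)) = min t (γ - t) + 1 := by
      intro t ht; rw [mem_range] at ht; omega
    rw [sum_range_succ', sum_congr rfl hshift, sum_add_distrib, sum_range_succ, ih]
    simp only [sum_const, card_range, smul_eq_mul]
    rw [show (γ + 2) ^ 2 = γ ^ 2 + (γ + 1) * 4 by ring, Nat.add_mul_div_right _ _ (by norm_num)]
    omega

lemma sum_range_cycleDist {γ i : ℕ} (hi : i < γ) :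
    ∑ j ∈ range γ, cycleDist γ i j = γ ^ 2 / 4 := by
  obtain ⟨m, rfl⟩ : ∃ m, γ = i + m := ⟨γ - i, by omega⟩
  -- positions `j < i` are the shifts `m + j` and positions `i + t` the shifts `t`
  rw [← sum_range_min_sub, sum_range_add, add_comm i m, sum_range_add, add_comm]
  congr 1
  · refine sum_congr rfl fun t ht => ?_
    rw [mem_range] at ht; unfold cycleDist Nat.dist; omega
  · refine sum_congr rfl fun t ht => ?_
    rw [mem_range] at ht; unfold cycleDist Nat.dist; omega

lemma sum_sum_range_eq_add_sum_Ioo {M : Type*} [AddCommMonoid M] (f : ℕ → ℕ → M) (n : ℕ) :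
    ∑ i ∈ range n, ∑ j ∈ range n, f i j
      = ∑ i ∈ range n, f i i + ∑ i ∈ range n, ∑ j ∈ Ioo i n, (f i j + f j i) := by
  induction n with
  | zero => simp
  | succ n ih =>
    have hIoo : ∀ i ∈ range n, ∑ j ∈ Ioo i (n + 1), (f i j + f j i)
        = ∑ j ∈ Ioo i n, (f i j + f j i) + (f i n + f n i) := by
      intro i hi
      rw [mem_range] at hi
      rw [show Ioo i (n + 1) = insert n (Ioo i n) by ext; simp only [mem_Ioo, mem_insert]; omega,
        sum_insert (by simp), add_comm]
    rw [sum_range_succ (fun i => ∑ j ∈ Ioo i (n + 1), _) n, sum_congr rfl hIoo,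
      show Ioo n (n + 1) = ∅ by ext; simp]
    simp only [sum_range_succ, sum_add_distrib, ih, sum_empty]
    abel

lemma sum_Ioo_add {R : Type*} [CommRing R] (a : ℕ → R) (γ : ℕ) :
    ∑ i ∈ range γ, ∑ j ∈ Ioo i γ, (a i + a j) = ((γ : R) - 1) * ∑ i ∈ range γ, a i := by
  have h := sum_sum_range_eq_add_sum_Ioo (fun i _ => a i) γ
  simp only [sum_const, card_range, nsmul_eq_mul, ← mul_sum] at h
  linear_combination -h

lemma sum_Ioo_add_sub_one_mul {K : Type*} [Field K] [CharZero K] {γ : ℕ} (n : ℕ → K)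
    (d : ℕ → ℕ → K) (F : K) (hsymm : ∀ i j, d i j = d j i) (hdiag : ∀ i, d i i = 0)
    (hrow : ∀ i ∈ range γ, ∑ j ∈ range γ, d i j = F) :
    ∑ i ∈ range γ, ∑ j ∈ Ioo i γ, (n i + n j - 1) * d i j
      = (∑ i ∈ range γ, n i - (γ : K) / 2) * F := by
  have h := sum_sum_range_eq_add_sum_Ioo (fun i j => (2 * n i - 1) * d i j) γ
  have hsum : ∑ i ∈ range γ, ∑ j ∈ range γ, (2 * n i - 1) * d i j
      = (2 * ∑ i ∈ range γ, n i - γ) * F := by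
    rw [sum_congr rfl fun i hi => by rw [← mul_sum, hrow i hi], ← sum_mul, sum_sub_distrib,
      mul_sum]
    simp
  have hpair : ∑ i ∈ range γ, ∑ j ∈ Ioo i γ, ((2 * n i - 1) * d i j + (2 * n j - 1) * d j i)
      = 2 * ∑ i ∈ range γ, ∑ j ∈ Ioo i γ, (n i + n j - 1) * d i j := by
    simp only [mul_sum]
    exact sum_congr rfl fun i _ => sum_congr rfl fun j _ => by rw [hsymm j i]; ring
  simp only [hdiag, mul_zero, sum_const_zero, zero_add, hsum, hpair] at h
  linear_combination -h / 2

lemma sum_Ioo_cross_eq {K : Type*} [Field K] [CharZero K] {γ : ℕ} (n a : ℕ → K)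
    (d : ℕ → ℕ → K) (F : K) (hsymm : ∀ i j, d i j = d j i) (hdiag : ∀ i, d i i = 0)
    (hrow : ∀ i ∈ range γ, ∑ j ∈ range γ, d i j = F) :
    ∑ i ∈ range γ, ∑ j ∈ Ioo i γ, (n j * a i + n i * n j * d i j + n i * a j)
      = (∑ i ∈ range γ, n i - (γ : K) / 2) * F + ((γ : K) - 1) * ∑ i ∈ range γ, a i
        + ∑ i ∈ range γ, ∑ j ∈ Ioo i γ,
            ((n i - 1) * a j + (n i - 1) * (n j - 1) * d i j + (n j - 1) * a i) := by
  rw [← sum_Ioo_add, ← sum_Ioo_add_sub_one_mul n d F hsymm hdiag hrow, ← sum_add_distrib,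
    ← sum_add_distrib]
  refine sum_congr rfl fun i _ => ?_
  rw [← sum_add_distrib, ← sum_add_distrib]
  exact sum_congr rfl fun j _ => by ring

namespace SimpleGraph.Walk
variable {V : Type*} {G : SimpleGraph V}

theorem le_add_length_of_adj {f : V → ℕ} (hf : ∀ a b, G.Adj a b → f a ≤ f b + 1) {x y : V}
    (w : G.Walk x y) : f x ≤ f y + w.length := by
  induction w with
  | nil => simp
  | cons hab _ ih => rw [length_cons]; linarith [hf _ _ hab]

end SimpleGraph.Walk

section ClassDist
variable {V : Type*} {G : SimpleGraph V} {c : V → ℕ} {i : ℕ}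

noncomputable def classDist (G : SimpleGraph V) (c : V → ℕ) (i : ℕ) (x y : V) : ℕ :=
  if h : c x = i ∧ c y = i then (G.induce {z | c z = i}).dist ⟨x, h.1⟩ ⟨y, h.2⟩ else 0

lemma classDist_of_mem (x y : {z | c z = i}) :
    classDist G c i x y = (G.induce {z | c z = i}).dist x y :=
  dif_pos ⟨x.2, y.2⟩

lemma classDist_self (x : V) : classDist G c i x x = 0 := by
  unfold classDist; split_ifs <;> simp

lemma exists_walk_classDist (hconn : (G.induce {z | c z = i}).Connected) {x y : V}
    (hx : c x = i) (hy : c y = i) : ∃ w : G.Walk x y, w.length = classDist G c i x y := by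
  obtain ⟨p, hp⟩ := (hconn ⟨x, hx⟩ ⟨y, hy⟩).exists_walk_length_eq_dist
  exact ⟨p.map (Embedding.induce _).toHom,
    (Walk.length_map _ _).trans (hp.trans (classDist_of_mem ⟨x, hx⟩ ⟨y, hy⟩).symm)⟩

lemma classDist_le_of_adj (hconn : (G.induce {z | c z = i}).Connected) {a b y : V}
    (ha : c a = i) (hb : c b = i) (hy : c y = i) (hab : G.Adj a b) :
    classDist G c i a y ≤ classDist G c i b y + 1 := by
  have hadj : (G.induce {z | c z = i}).Adj ⟨a, ha⟩ ⟨b, hb⟩ := hab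
  rw [classDist, dif_pos ⟨ha, hy⟩, classDist, dif_pos ⟨hb, hy⟩, add_comm,
    ← dist_eq_one_iff_adj.2 hadj]
  exact hconn.dist_triangle

end ClassDist

section Unicyclic
variable {V : Type*} {G : SimpleGraph V} {γ : ℕ} {c : V → ℕ} {v : ℕ → V}

noncomputable def unicyclicDist (G : SimpleGraph V) (γ : ℕ) (c : V → ℕ) (v : ℕ → V)
    (x y : V) : ℕ :=
  if c x = c y then classDist G c (c x) x y
  else classDist G c (c x) x (v (c x)) + cycleDist γ (c x) (c y) + classDist G c (c y) (v (c y)) y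

namespace CycleAttach
variable (h : CycleAttach G γ c v)
include h

lemma connected {i : ℕ} (hi : i < γ) : (G.induce {x | c x = i}).Connected :=
  (h.2.2.1 i hi).connected

lemma adj_root_succ (hγ : 2 ≤ γ) {i : ℕ} (hi : i < γ) : G.Adj (v i) (v ((i + 1) % γ)) := by
  obtain ⟨-, hroot, -, hadj⟩ := h
  have hi' : (i + 1) % γ < γ := Nat.mod_lt _ (by omega)
  have hne : i ≠ (i + 1) % γ := by
    rcases Nat.lt_or_ge (i + 1) γ with hlt | hge
    · rw [Nat.mod_eq_of_lt hlt]; omega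
    · rw [show i + 1 = γ by omega, Nat.mod_self]; omega
  rw [hadj _ _ (by rwa [hroot i hi, hroot _ hi']), hroot i hi, hroot _ hi']
  exact ⟨rfl, rfl, Or.inl rfl⟩

lemma exists_walk_root_add (hγ : 2 ≤ γ) {i : ℕ} (hi : i < γ) (m : ℕ) :
    ∃ w : G.Walk (v i) (v ((i + m) % γ)), w.length = m := by
  induction m with
  | zero => exact ⟨Walk.nil.copy rfl (by rw [add_zero, Nat.mod_eq_of_lt hi]), by simp⟩
  | succ m ih =>
    obtain ⟨w, hw⟩ := ih
    have hstep := h.adj_root_succ hγ (Nat.mod_lt (i + m) (by omega))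
    rw [Nat.mod_add_mod, add_assoc] at hstep
    exact ⟨w.concat hstep, by rw [Walk.length_concat, hw]⟩

lemma exists_walk_root (hγ : 2 ≤ γ) {i j : ℕ} (hi : i < γ) (hj : j < γ) :
    ∃ w : G.Walk (v i) (v j), w.length = cycleDist γ i j := by
  have hcases : (i + cycleDist γ i j) % γ = j ∨ (j + cycleDist γ i j) % γ = i := by
    rcases (by unfold cycleDist Nat.dist; omega : i + cycleDist γ i j = j ∨
        j + cycleDist γ i j = i ∨ i + cycleDist γ i j = j + γ ∨ j + cycleDist γ i j = i + γ)
      with e | e | e | e <;> simp [e, Nat.mod_eq_of_lt, hi, hj]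
  rcases hcases with hij | hji
  · obtain ⟨w, hw⟩ := h.exists_walk_root_add hγ hi (cycleDist γ i j)
    exact ⟨w.copy rfl (congrArg v hij), by rw [Walk.length_copy, hw]⟩
  · obtain ⟨w, hw⟩ := h.exists_walk_root_add hγ hj (cycleDist γ i j)
    exact ⟨(w.copy rfl (congrArg v hji)).reverse, by rw [Walk.length_reverse, Walk.length_copy, hw,
      cycleDist_comm]⟩

lemma exists_walk_unicyclicDist (hγ : 2 ≤ γ) (x y : V) :
    ∃ w : G.Walk x y, w.length = unicyclicDist G γ c v x y := by
  have hc := h.1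
  have hroot := h.2.1
  unfold unicyclicDist
  split_ifs with hxy
  · exact exists_walk_classDist (h.connected (hc x)) rfl hxy.symm
  · obtain ⟨w₁, h₁⟩ := exists_walk_classDist (h.connected (hc x)) rfl (hroot _ (hc x))
    obtain ⟨w₂, h₂⟩ := h.exists_walk_root hγ (hc x) (hc y)
    obtain ⟨w₃, h₃⟩ := exists_walk_classDist (h.connected (hc y)) (hroot _ (hc y)) rfl
    exact ⟨(w₁.append w₂).append w₃, by simp only [Walk.length_append, h₁, h₂, h₃]⟩

lemma unicyclicDist_root {i : ℕ} (hi : i < γ) (y : V) :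
    unicyclicDist G γ c v (v i) y = cycleDist γ i (c y) + classDist G c (c y) (v (c y)) y := by
  unfold unicyclicDist
  rw [h.2.1 i hi]
  split_ifs with hiy
  · rw [hiy, cycleDist_self, zero_add]
  · rw [classDist_self, zero_add]

lemma unicyclicDist_le_of_adj {a b : V} (hab : G.Adj a b) (y : V) :
    unicyclicDist G γ c v a y ≤ unicyclicDist G γ c v b y + 1 := by
  have hc := h.1
  by_cases hcab : c a = c b
  · have hconn := h.connected (hc a)
    unfold unicyclicDist
    rw [← hcab]
    split_ifs with hay
    · exact classDist_le_of_adj hconn rfl hcab.symm hay.symm hab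
    · have := classDist_le_of_adj hconn rfl hcab.symm (h.2.1 _ (hc a)) hab
      omega
  · obtain ⟨ha, hb, hsucc⟩ := (h.2.2.2 a b hcab).1 hab
    have hstep : cycleDist γ (c a) (c b) ≤ 1 := by
      rcases hsucc with e | e
      · rw [← e]; exact cycleDist_succ_mod_le_one (hc a)
      · rw [cycleDist_comm, ← e]; exact cycleDist_succ_mod_le_one (hc b)
    rw [ha, hb, h.unicyclicDist_root (hc a), h.unicyclicDist_root (hc b)]
    have := cycleDist_triangle (hc a) (hc b) (hc y)
    omega

lemma dist_eq_unicyclicDist (hγ : 2 ≤ γ) (x y : V) :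
    G.dist x y = unicyclicDist G γ c v x y := by
  obtain ⟨w, hw⟩ := h.exists_walk_unicyclicDist hγ x y
  obtain ⟨p, hp⟩ := w.reachable.exists_walk_length_eq_dist
  refine le_antisymm (hw ▸ dist_le w) ?_
  have := p.le_add_length_of_adj (f := (unicyclicDist G γ c v · y))
    fun a b hab => h.unicyclicDist_le_of_adj hab y
  simpa [unicyclicDist, classDist_self, hp] using this

lemma dist_induce (hγ : 2 ≤ γ) {i : ℕ} (x y : {z | c z = i}) :
    (G.induce {z | c z = i}).dist x y = G.dist x y := by
  have hx : c x = i := x.2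
  rw [h.dist_eq_unicyclicDist hγ, unicyclicDist, if_pos (hx.trans y.2.symm), hx,
    classDist_of_mem]

lemma dist_eq_dist_root_add (hγ : 2 ≤ γ) {x y : V} (hxy : c x ≠ c y) :
    G.dist x y = G.dist x (v (c x)) + cycleDist γ (c x) (c y) + G.dist (v (c y)) y := by
  simp only [h.dist_eq_unicyclicDist hγ, unicyclicDist, if_neg hxy, h.2.1 _ (h.1 x),
    h.2.1 _ (h.1 y), if_true]

end CycleAttach
end Unicyclic

lemma two_nsmul_sum_sym2_lift {V M : Type*} [Fintype V] [DecidableEq V] [AddCommMonoid M]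
    (f : V → V → M) (hsymm : ∀ x y, f x y = f y x) (hdiag : ∀ x, f x x = 0) :
    2 • ∑ p : Sym2 V, Sym2.lift ⟨f, hsymm⟩ p = ∑ x, ∑ y, f x y := by
  rw [← sum_product', univ_product_univ, ← sum_fiberwise univ (fun q : V × V => s(q.1, q.2)),
    smul_sum]
  refine sum_congr rfl fun p _ => ?_
  induction p using Sym2.ind with
  | _ a b =>
    simp only [Sym2.lift_mk]
    by_cases hab : a = b
    · subst hab
      have : ({q | s(q.1, q.2) = s(a, a)} : Finset (V × V)) = {(a, a)} := by
        ext q; simp [Prod.ext_iff]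
      rw [this, sum_singleton, hdiag, smul_zero]
    · have : ({q | s(q.1, q.2) = s(a, b)} : Finset (V × V)) = {(a, b), (b, a)} := by
        ext q; simp [Prod.ext_iff]
      rw [this, sum_pair (by simp [hab]), hsymm b a, two_nsmul]

lemma two_mul_wienerIndex {V : Type*} [Fintype V] [DecidableEq V] (G : SimpleGraph V) :
    2 * wienerIndex G = ∑ x, ∑ y, G.dist x y :=
  two_nsmul_sum_sym2_lift _ _ fun _ => dist_self

lemma sum_eq_sum_range_sum_fiber {V M : Type*} [Fintype V] [AddCommMonoid M] {c : V → ℕ} {γ : ℕ}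
    (hc : ∀ x, c x < γ) (f : V → M) :
    ∑ x, f x = ∑ i ∈ range γ, ∑ x : {y | c y = i}, f x := by
  rw [← sum_fiberwise_of_maps_to (g := c) (t := range γ) fun x _ => mem_range.2 (hc x)]
  refine sum_congr rfl fun i _ => ?_
  rw [sum_subtype]
  simp

lemma card_eq_sum_range_card_fiber {V : Type*} [Fintype V] {c : V → ℕ} {γ : ℕ}
    (hc : ∀ x, c x < γ) : Fintype.card V = ∑ i ∈ range γ, Fintype.card {y | c y = i} := by
  simp only [Fintype.card_eq_sum_ones]
  exact sum_eq_sum_range_sum_fiber hc _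

lemma two_mul_wienerIndex_eq_sum_range_sum_range {V : Type*} [Fintype V] [DecidableEq V]
    (G : SimpleGraph V) {c : V → ℕ} {γ : ℕ} (hc : ∀ x, c x < γ) :
    2 * wienerIndex G = ∑ i ∈ range γ, ∑ j ∈ range γ,
      ∑ x : {y | c y = i}, ∑ y : {y | c y = j}, G.dist x y := by
  rw [two_mul_wienerIndex, sum_eq_sum_range_sum_fiber hc]
  refine sum_congr rfl fun i _ => ?_
  simp only [sum_eq_sum_range_sum_fiber hc (G.dist _ ·)]
  exact sum_comm

namespace CycleAttach
variable {V : Type*} [Fintype V] {G : SimpleGraph V} {γ : ℕ} {c : V → ℕ}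
  {v : ℕ → V} (h : CycleAttach G γ c v) (hγ : 2 ≤ γ)
include h hγ

lemma sum_sum_dist_self [DecidableEq V] (i : ℕ) :
    ∑ x : {y | c y = i}, ∑ y : {y | c y = i}, G.dist x y
      = 2 * wienerIndex (G.induce {y | c y = i}) := by
  simp only [two_mul_wienerIndex, h.dist_induce hγ]

lemma sum_sum_dist_of_ne {i j : ℕ} (hij : i ≠ j) :
    ∑ x : {y | c y = i}, ∑ y : {y | c y = j}, G.dist x y
      = Fintype.card {y | c y = j} * ∑ x : {y | c y = i}, G.dist (v i) x
        + Fintype.card {y | c y = i} * Fintype.card {y | c y = j} * cycleDist γ i j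
        + Fintype.card {y | c y = i} * ∑ y : {y | c y = j}, G.dist (v j) y := by
  have hdist : ∀ (x : {y | c y = i}) (y : {y | c y = j}),
      G.dist x y = G.dist (v i) x + cycleDist γ i j + G.dist (v j) y := by
    intro x y
    have hx : c x = i := x.2
    have hy : c y = j := y.2
    rw [h.dist_eq_dist_root_add hγ (by rw [hx, hy]; exact hij), hx, hy, dist_comm (u := (x : V))]
  simp only [hdist, sum_add_distrib, sum_const, card_univ, smul_eq_mul, ← mul_sum]
  ring

lemma sum_dite_dist_root (i : ℕ) :
    (∑ x : {y | c y = i}, if hv : v i ∈ {y | c y = i} then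
        (G.induce {y | c y = i}).dist ⟨v i, hv⟩ x else 0)
      = ∑ x : {y | c y = i}, G.dist (v i) x := by
  refine sum_congr rfl fun x _ => ?_
  have hx : c x = i := x.2
  have hv : v i ∈ {y | c y = i} := h.2.1 i (hx ▸ h.1 x)
  rw [dif_pos hv, h.dist_induce hγ]

theorem wienerIndex_eq_sum_add_sum_Ioo [DecidableEq V] :
    wienerIndex G = ∑ i ∈ range γ, wienerIndex (G.induce {y | c y = i})
      + ∑ i ∈ range γ, ∑ j ∈ Ioo i γ,
          (Fintype.card {y | c y = j} * ∑ x : {y | c y = i}, G.dist (v i) x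
            + Fintype.card {y | c y = i} * Fintype.card {y | c y = j} * cycleDist γ i j
            + Fintype.card {y | c y = i} * ∑ y : {y | c y = j}, G.dist (v j) y) := by
  have hswap : ∀ i j, ∑ x : {y | c y = j}, ∑ y : {y | c y = i}, G.dist x y
      = ∑ x : {y | c y = i}, ∑ y : {y | c y = j}, G.dist x y := fun i j => by
    rw [sum_comm]; simp only [dist_comm]
  have h2 := two_mul_wienerIndex_eq_sum_range_sum_range G h.1
  simp only [sum_sum_range_eq_add_sum_Ioo, hswap, ← two_mul, h.sum_sum_dist_self hγ, ← mul_sum,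
    ← mul_add] at h2
  have hcross : ∀ i j, j ∈ Ioo i γ → _ :=
    fun i j hj => h.sum_sum_dist_of_ne hγ (mem_Ioo.1 hj).1.ne
  simp +contextual only [Nat.eq_of_mul_eq_mul_left two_pos h2, hcross]

end CycleAttach

/-- The Wiener index formula for a unicyclic graph `G = C_γ(T_1,…,T_γ)`:
`W(G) = (n - γ/2)⌊γ²/4⌋ + (γ-1)∑α_i + ∑W(T_i) + ∑_{i<j} (ℓ_i α_j + ℓ_i ℓ_j d_{C_γ}(v_i,v_j) + ℓ_j α_i)`,
where `α_i = D_{T_i}(v_i)`, `ℓ_i = |V(T_i)| - 1` and `n = |V(G)|`. -/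
theorem wiener_unicyclic_formula {V : Type*} [Fintype V] [DecidableEq V]
    (G : SimpleGraph V) (γ : ℕ) (hγ : 3 ≤ γ) (c : V → ℕ) (v : ℕ → V)
    (hattach : CycleAttach G γ c v) :
    (wienerIndex G : ℚ) =
      ((Fintype.card V : ℚ) - (γ : ℚ) / 2) * ((γ ^ 2 / 4 : ℕ) : ℚ)
      + ((γ : ℚ) - 1) *
          ∑ i ∈ Finset.range γ,
            ((∑ x : {y | c y = i},
                if h : v i ∈ {y | c y = i} then
                  (G.induce {y | c y = i}).dist ⟨v i, h⟩ x else 0 : ℕ) : ℚ)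
      + ∑ i ∈ Finset.range γ, (wienerIndex (G.induce {y | c y = i}) : ℚ)
      + ∑ i ∈ Finset.range γ, ∑ j ∈ Finset.Ioo i γ,
          (((Fintype.card {y | c y = i} : ℚ) - 1) *
              ((∑ x : {y | c y = j},
                if h : v j ∈ {y | c y = j} then
                  (G.induce {y | c y = j}).dist ⟨v j, h⟩ x else 0 : ℕ) : ℚ)
            + ((Fintype.card {y | c y = i} : ℚ) - 1) * ((Fintype.card {y | c y = j} : ℚ) - 1) *
                ((min (j - i) (γ - (j - i)) : ℕ) : ℚ)
            + ((Fintype.card {y | c y = j} : ℚ) - 1) *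
              ((∑ x : {y | c y = i},
                if h : v i ∈ {y | c y = i} then
                  (G.induce {y | c y = i}).dist ⟨v i, h⟩ x else 0 : ℕ) : ℚ)) := by
  have hγ2 : 2 ≤ γ := by omega
  have hmin : ∀ i j, j ∈ Ioo i γ → min (j - i) (γ - (j - i)) = cycleDist γ i j :=
    fun i j hj => (cycleDist_eq_min_sub (mem_Ioo.1 hj).1.le).symm
  simp +contextual only [hattach.sum_dite_dist_root hγ2, hmin]
  rw [card_eq_sum_range_card_fiber hattach.1, hattach.wienerIndex_eq_sum_add_sum_Ioo hγ2]
  have hcross := sum_Ioo_cross_eq (fun i => (Fintype.card {y | c y = i} : ℚ))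
    (fun i => ((∑ x : {y | c y = i}, G.dist (v i) x : ℕ) : ℚ)) (fun i j => (cycleDist γ i j : ℚ))
    ((γ ^ 2 / 4 : ℕ) : ℚ) (fun i j => by rw [cycleDist_comm]) (fun i => by simp [cycleDist_self])
    (fun i hi => by exact_mod_cast sum_range_cycleDist (mem_range.1 hi))
  push_cast at hcross ⊢
  linear_combination hcross
end

section
/- Suppose c = (c_{-m},...,c_m) is a symmetric decreasing non-negative sequence (c_0 \ge c_1 = c_{-1} \ge c_2 = c_{-2} \ge ...), and x, y are non-negative sequences indexed by {-k,...,k}. Then the bilinear form \sum_{r=-k}^{k} \sum_{s=-k}^{k} c_{r-s} x_r y_s is maximized over all rearrangements of x and y when x and y are arranged in the '+' order, i.e., x^+_0 \ge x^+_1 \ge x^+_{-1} \ge x^+_2 \ge x^+_{-2} \ge ... \ge x^+_k \ge x^+_{-k} and similarly for y^+. -/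
open Finset

/-- A sequence `x : ℤ → ℝ` is in the `+` order on `{-k,…,k}` if
`x 0 ≥ x 1 ≥ x (-1) ≥ x 2 ≥ x (-2) ≥ ⋯ ≥ x k ≥ x (-k)`. -/
def PlusArranged (k : ℕ) (x : ℤ → ℝ) : Prop :=
  ∀ i : ℕ, 1 ≤ i → i ≤ k → x (i : ℤ) ≤ x (1 - (i : ℤ)) ∧ x (-(i : ℤ)) ≤ x (i : ℤ)

/-!
A layer-cake decomposition reduces the theorem to indicator functions. On `{-k,…,k}` a sequence
in the `+` order is `x = ∑ⱼ λⱼ 1_{Sⱼ}` with `λⱼ ≥ 0`, where `Sⱼ` is the centred segment formed by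
the first `j + 1` integers of the `+` order; likewise `c(d) = ∑ₜ νₜ 1_{|d| ≤ t}` with `νₜ ≥ 0`.
Rearranging `x` by `σ` replaces `Sⱼ` by `σ⁻¹ Sⱼ`, a set of the same size, so it suffices that among
finite sets `A, B ⊆ ℤ` of given sizes the number of pairs `(r, s) ∈ A × B` with `|r - s| ≤ t` is
largest for centred segments. With `R(d)` the number of representations `d = r - s`, this number
is `∑_{|d| ≤ t} R(d)`; Pollard's inequality `∑_d min(R(d), m) ≥ m (|A| + |B| - m)` bounds it by a
quantity depending only on `|A|` and `|B|`, and centred segments attain that bound.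
-/

/-- The enumeration `0, 1, -1, 2, -2, …` of `ℤ` in the `+` order. -/
def plusEnum (j : ℕ) : ℤ := if j % 2 = 1 then ((j + 1) / 2 : ℕ) else -((j / 2 : ℕ) : ℤ)

def plusIndex (r : ℤ) : ℕ := if 0 < r then (2 * r - 1).toNat else (-2 * r).toNat

/-- The first `j + 1` integers in the `+` order. -/
noncomputable def plusSegment (j : ℕ) : Finset ℤ := Icc (-((j / 2 : ℕ) : ℤ)) ((j + 1) / 2 : ℕ)

lemma plusEnum_plusIndex (r : ℤ) : plusEnum (plusIndex r) = r := by
  unfold plusEnum plusIndex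
  split_ifs <;> omega

lemma mem_plusSegment {j : ℕ} {r : ℤ} : r ∈ plusSegment j ↔ plusIndex r ≤ j := by
  simp only [plusSegment, mem_Icc, plusIndex]
  split_ifs <;> omega

lemma plusSegment_two_mul (k : ℕ) : plusSegment (2 * k) = Icc (-(k : ℤ)) k := by
  simp [plusSegment, Nat.mul_div_cancel_left k two_pos, show (2 * k + 1) / 2 = k by omega]

lemma plusSegment_mono : Monotone plusSegment := fun _ _ hij _ hr =>
  mem_plusSegment.2 ((mem_plusSegment.1 hr).trans hij)

lemma card_plusSegment (j : ℕ) : #(plusSegment j) = j + 1 := by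
  rw [plusSegment, Int.card_Icc]
  omega

lemma PlusArranged.plusEnum_succ_le {k : ℕ} {x : ℤ → ℝ} (hx : PlusArranged k x) {j : ℕ}
    (hj : j < 2 * k) : x (plusEnum (j + 1)) ≤ x (plusEnum j) := by
  obtain ⟨i, rfl | rfl⟩ := Nat.even_or_odd' j
  · have h := (hx (i + 1) (by omega) (by omega)).1
    convert h using 2 <;> simp only [plusEnum] <;> split_ifs <;> omega
  · have h := (hx (i + 1) (by omega) (by omega)).2
    convert h using 2 <;> simp only [plusEnum] <;> split_ifs <;> omega

def layerWeight (n : ℕ) (g : ℕ → ℝ) (j : ℕ) : ℝ :=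
  (if j ≤ n then g j else 0) - (if j + 1 ≤ n then g (j + 1) else 0)

lemma layerWeight_nonneg {n : ℕ} {g : ℕ → ℝ} (hg : ∀ j < n, g (j + 1) ≤ g j) (hn : 0 ≤ g n)
    (j : ℕ) : 0 ≤ layerWeight n g j := by
  unfold layerWeight
  rcases lt_trichotomy j n with h | rfl | h
  · rw [if_pos h.le, if_pos (Nat.succ_le_of_lt h), sub_nonneg]
    exact hg j h
  · simpa using hn
  · rw [if_neg (by omega), if_neg (by omega), sub_zero]

lemma sum_layerWeight {n i : ℕ} (g : ℕ → ℝ) (hi : i ≤ n) :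
    ∑ j ∈ range (n + 1), (if i ≤ j then layerWeight n g j else 0) = g i := by
  set G : ℕ → ℝ := fun j => if j ≤ n then g j else 0
  have hrange : (range (n + 1)).filter (i ≤ ·) = Ico i (n + 1) := by
    ext j
    simp only [mem_filter, mem_range, mem_Ico]
    omega
  rw [← sum_filter, hrange, sum_Ico_eq_sub _ (by omega)]
  change ∑ j ∈ range (n + 1), (G j - G (j + 1)) - ∑ j ∈ range i, (G j - G (j + 1)) = g i
  rw [sum_range_sub', sum_range_sub']
  simp [G, hi]

lemma PlusArranged.layerWeight_comp_plusEnum_nonneg {k : ℕ} {x : ℤ → ℝ} (hx : PlusArranged k x)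
    (hx0 : ∀ i, 0 ≤ x i) (j : ℕ) : 0 ≤ layerWeight (2 * k) (x ∘ plusEnum) j :=
  layerWeight_nonneg (fun _ hj => hx.plusEnum_succ_le hj) (hx0 _) j

lemma apply_eq_sum_layerWeight (x : ℤ → ℝ) (π : Equiv.Perm ℤ) {n : ℕ} {r : ℤ}
    (hr : π r ∈ plusSegment n) :
    x (π r) = ∑ j ∈ range (n + 1),
      if r ∈ (plusSegment j).map π.symm.toEmbedding then layerWeight n (x ∘ plusEnum) j else 0 := by
  simp_rw [mem_map_equiv, Equiv.symm_symm, mem_plusSegment]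
  rw [sum_layerWeight _ (mem_plusSegment.1 hr), Function.comp_apply, plusEnum_plusIndex]

lemma eq_sum_layerWeight_abs (c : ℤ → ℝ) (hc : ∀ j, c (-j) = c j) {n : ℕ} {d : ℤ}
    (hd : |d| ≤ n) :
    c d = ∑ t ∈ range (n + 1), if |d| ≤ t then layerWeight n (fun t => c t) t else 0 := by
  rw [Int.abs_eq_natAbs, Nat.cast_le] at hd
  simp_rw [Int.abs_eq_natAbs, Nat.cast_le]
  rw [sum_layerWeight _ hd]
  rcases Int.natAbs_eq d with h | h
  · rw [← h]
  · rw [← neg_eq_iff_eq_neg.2 h, hc]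

def diffCount (A B : Finset ℤ) (d : ℤ) : ℕ := #{p ∈ A ×ˢ B | p.1 - p.2 = d}

def pairCount (t : ℕ) (A B : Finset ℤ) : ℕ := #{p ∈ A ×ˢ B | |p.1 - p.2| ≤ (t : ℤ)}

lemma sum_diffCount {A B U : Finset ℤ} (hU : ∀ p ∈ A ×ˢ B, p.1 - p.2 ∈ U) :
    ∑ d ∈ U, diffCount A B d = #A * #B := by
  rw [← card_product]
  exact (card_eq_sum_card_fiberwise hU).symm

lemma pairCount_eq_sum_diffCount (t : ℕ) (A B : Finset ℤ) :
    pairCount t A B = ∑ d ∈ Icc (-(t : ℤ)) t, diffCount A B d := by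
  have hmaps : Set.MapsTo (fun p : ℤ × ℤ => p.1 - p.2)
      ((A ×ˢ B).filter fun p => |p.1 - p.2| ≤ (t : ℤ)) (Icc (-(t : ℤ)) t) :=
    fun p hp => mem_Icc.2 (abs_le.1 (mem_filter.1 hp).2)
  rw [pairCount, card_eq_sum_card_fiberwise hmaps]
  refine sum_congr rfl fun d hd => ?_
  rw [filter_filter, diffCount]
  refine congrArg card (filter_congr fun p _ => ?_)
  constructor
  · exact And.right
  · rintro rfl
    exact ⟨abs_le.2 (mem_Icc.1 hd), rfl⟩

lemma Fin.card_filter_val_lt_or_val_lt {a b m : ℕ} (ha : m ≤ a) (hb : m ≤ b) :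
    #{p : Fin a × Fin b | (p.1 : ℕ) < m ∨ (p.2 : ℕ) < m} = m * (a + b - m) := by
  have hhigh : ∀ n, m ≤ n → #{i : Fin n | ¬(i : ℕ) < m} = n - m := fun n hn => by
    have := card_filter_add_card_filter_not (s := (univ : Finset (Fin n))) fun i => (i : ℕ) < m
    rw [Fin.card_filter_val_lt, card_univ, Fintype.card_fin] at this
    omega
  have hcompl : #{p : Fin a × Fin b | ¬((p.1 : ℕ) < m ∨ (p.2 : ℕ) < m)} = (a - m) * (b - m) := by
    have hprod : univ.filter (fun p : Fin a × Fin b => ¬((p.1 : ℕ) < m ∨ (p.2 : ℕ) < m)) =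
        univ.filter (fun i : Fin a => ¬(i : ℕ) < m) ×ˢ
          univ.filter (fun j : Fin b => ¬(j : ℕ) < m) := by
      ext p
      simp [not_or]
    rw [hprod, card_product, hhigh a ha, hhigh b hb]
  have htotal := card_filter_add_card_filter_not (s := (univ : Finset (Fin a × Fin b)))
    fun p => (p.1 : ℕ) < m ∨ (p.2 : ℕ) < m
  rw [hcompl, card_univ, Fintype.card_prod, Fintype.card_fin, Fintype.card_fin] at htotal
  obtain ⟨a, rfl⟩ := Nat.exists_eq_add_of_le ha
  obtain ⟨b, rfl⟩ := Nat.exists_eq_add_of_le hb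
  have : m + a + (m + b) - m = m + a + b := by omega
  simp only [this, Nat.add_sub_cancel_left] at htotal ⊢
  nlinarith

/-- On a fibre of `(i, j) ↦ f i - g j` the two coordinates increase together. -/
lemma injOn_min_of_sub_eq {a b : ℕ} {f : Fin a → ℤ} {g : Fin b → ℤ} (hf : StrictMono f)
    (hg : StrictMono g) (d : ℤ) :
    Set.InjOn (fun p : Fin a × Fin b => min (p.1 : ℕ) p.2) {p | f p.1 - g p.2 = d} := by
  have mono : ∀ p q : Fin a × Fin b, f p.1 - g p.2 = d → f q.1 - g q.2 = d →
      p.1 < q.1 → min (p.1 : ℕ) p.2 < min (q.1 : ℕ) q.2 := by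
    intro p q hp hq hlt
    have : p.2 < q.2 := hg.lt_iff_lt.1 (by linarith [hf hlt])
    exact min_lt_min (Fin.lt_def.1 hlt) (Fin.lt_def.1 this)
  intro p hp q hq hpq
  rcases lt_trichotomy p.1 q.1 with h | h | h
  · exact absurd hpq (mono p q hp hq h).ne
  · refine Prod.ext h (hg.injective ?_)
    have : f p.1 - g p.2 = f q.1 - g q.2 := hp.trans hq.symm
    rw [h] at this
    linarith
  · exact absurd hpq (mono q p hq hp h).ne'

/-- Pollard's inequality. Enumerate `A` and `B` increasingly; the index pairs `(i, j)` with
`min i j < m` number `m (#A + #B - m)`, and each fibre of `(i, j) ↦ aᵢ - bⱼ` contains at most `m`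
of them. -/
theorem le_sum_min_diffCount {A B U : Finset ℤ} {m : ℕ} (hmA : m ≤ #A) (hmB : m ≤ #B)
    (hU : ∀ p ∈ A ×ˢ B, p.1 - p.2 ∈ U) :
    m * (#A + #B - m) ≤ ∑ d ∈ U, min (diffCount A B d) m := by
  set f := A.orderEmbOfFin rfl
  set g := B.orderEmbOfFin rfl
  set E : Finset (Fin #A × Fin #B) := {p | (p.1 : ℕ) < m ∨ (p.2 : ℕ) < m}
  have hfiber : ∀ d, #{p ∈ E | f p.1 - g p.2 = d} ≤ min (diffCount A B d) m := by
    intro d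
    apply le_min
    · refine card_le_card_of_injOn (fun p => (f p.1, g p.2)) (fun p hp => ?_) fun p _ q _ h => ?_
      · rw [mem_coe, mem_filter] at hp
        simp [hp.2, orderEmbOfFin_mem, f, g]
      · simp only [Prod.mk.injEq, f.injective.eq_iff, g.injective.eq_iff] at h
        exact Prod.ext h.1 h.2
    · simpa using card_le_card_of_injOn (s := E.filter fun p => f p.1 - g p.2 = d) (t := range m)
        (fun p => min (p.1 : ℕ) p.2)
        (fun p hp => by
          rw [mem_coe, mem_filter] at hp
          simp only [E, mem_filter, mem_univ, true_and] at hp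
          simp only [coe_range, Set.mem_Iio]
          omega)
        ((injOn_min_of_sub_eq f.strictMono g.strictMono d).mono (s₁ := ↑(E.filter _))
          fun p hp => (mem_filter.1 (mem_coe.1 hp)).2)
  calc m * (#A + #B - m) = #E := (Fin.card_filter_val_lt_or_val_lt hmA hmB).symm
    _ = ∑ d ∈ U, #{p ∈ E | f p.1 - g p.2 = d} :=
        card_eq_sum_card_fiberwise fun p _ => hU (f p.1, g p.2) (mem_product.2
          ⟨orderEmbOfFin_mem A rfl _, orderEmbOfFin_mem B rfl _⟩)
    _ ≤ _ := sum_le_sum fun d _ => hfiber d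

lemma pairCount_add_le {A B : Finset ℤ} (t : ℕ) {m : ℕ} (hmA : m ≤ #A) (hmB : m ≤ #B) :
    pairCount t A B + m * (#A + #B - m) ≤ (2 * t + 1) * m + #A * #B := by
  set W := Icc (-(t : ℤ)) t
  set U := W ∪ (A ×ˢ B).image fun p => p.1 - p.2
  have hU : ∀ p ∈ A ×ˢ B, p.1 - p.2 ∈ U := fun p hp => mem_union_right _ (mem_image_of_mem _ hp)
  have hsplit : ∑ d ∈ U, min (diffCount A B d) m + ∑ d ∈ U, (diffCount A B d - m) = #A * #B := by
    rw [← sum_add_distrib, ← sum_diffCount hU]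
    exact sum_congr rfl fun d _ => by omega
  have hW : pairCount t A B ≤ (2 * t + 1) * m + ∑ d ∈ U, (diffCount A B d - m) :=
    calc pairCount t A B = ∑ d ∈ W, diffCount A B d := pairCount_eq_sum_diffCount t A B
      _ ≤ ∑ d ∈ W, (m + (diffCount A B d - m)) := sum_le_sum fun d _ => by omega
      _ = (2 * t + 1) * m + ∑ d ∈ W, (diffCount A B d - m) := by
        rw [sum_add_distrib, sum_const, Int.card_Icc, smul_eq_mul]
        congr 2
        omega
      _ ≤ _ := by gcongr; exact subset_union_left
  have := le_sum_min_diffCount hmA hmB hU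
  omega

lemma sum_range_sub_two_mul {n : ℕ} : ∀ {M : ℕ}, 2 * M ≤ n →
    ∑ θ ∈ range M, (n - 1 - 2 * θ) = M * (n - M)
  | 0, _ => by simp
  | M + 1, h => by
    rw [sum_range_succ, sum_range_sub_two_mul (by omega)]
    obtain ⟨c, rfl⟩ := Nat.exists_eq_add_of_le h
    have e1 : 2 * (M + 1) + c - M = M + 2 + c := by omega
    have e2 : 2 * (M + 1) + c - 1 - 2 * M = c + 1 := by omega
    have e3 : 2 * (M + 1) + c - (M + 1) = M + 1 + c := by omega
    rw [e1, e2, e3]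
    ring

lemma min_mul_add_sub_min (a b : ℕ) : min a b * (a + b - min a b) = a * b := by
  rcases le_total a b with h | h
  · rw [min_eq_left h, Nat.add_sub_cancel_left]
  · rw [min_eq_right h, Nat.add_sub_cancel, Nat.mul_comm]

/-- `pairCount` of centred segments of sizes `a` and `b`: the level set `{d | θ < diffCount d}`
is an interval of length `a + b - 1 - 2θ` centred at `0` or `±1/2`. -/
def pairBound (t a b : ℕ) : ℕ := ∑ θ ∈ range (min a b), min (2 * t + 1) (a + b - 1 - 2 * θ)

/-- `m` counts the levels `θ` whose level set covers all of `[-t, t]`. -/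
lemma pairBound_add_eq (t a b : ℕ) :
    let m := min (min a b) ((a + b) / 2 - t)
    pairBound t a b + m * (a + b - m) = (2 * t + 1) * m + a * b := by
  intro m
  have hm : m ≤ min a b := min_le_left _ _
  have hsplit := sum_range_add_sum_Ico (fun θ => min (2 * t + 1) (a + b - 1 - 2 * θ)) hm
  have hlow : ∀ θ ∈ range m, min (2 * t + 1) (a + b - 1 - 2 * θ) = 2 * t + 1 := fun θ hθ => by
    simp only [mem_range] at hθ
    omega
  have hhigh : ∀ θ ∈ Ico m (min a b), min (2 * t + 1) (a + b - 1 - 2 * θ) = a + b - 1 - 2 * θ :=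
    fun θ hθ => by
      simp only [mem_Ico] at hθ
      omega
  have hgauss := sum_range_add_sum_Ico (fun θ => a + b - 1 - 2 * θ) hm
  rw [sum_range_sub_two_mul (by omega), sum_range_sub_two_mul (by omega),
    min_mul_add_sub_min] at hgauss
  rw [pairBound, ← hsplit, sum_congr rfl hlow, sum_congr rfl hhigh, sum_const, card_range,
    smul_eq_mul]
  linarith

lemma pairCount_le_pairBound (t : ℕ) (A B : Finset ℤ) : pairCount t A B ≤ pairBound t #A #B := by
  have h := pairBound_add_eq t #A #B
  have := pairCount_add_le (A := A) (B := B) t (m := min (min #A #B) ((#A + #B) / 2 - t))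
    (by omega) (by omega)
  omega

lemma sum_min_eq_sum_card_filter_lt {α : Type*} (s : Finset α) (f : α → ℕ) (M : ℕ) :
    ∑ a ∈ s, min (f a) M = ∑ θ ∈ range M, #{a ∈ s | θ < f a} := by
  simp_rw [card_filter]
  rw [sum_comm]
  refine sum_congr rfl fun a _ => ?_
  rw [← card_filter, ← card_range (min (f a) M)]
  congr 1
  ext θ
  simp only [mem_filter, mem_range]
  omega

lemma card_Icc_le_diffCount (lo₁ hi₁ lo₂ hi₂ d : ℤ) :
    #(Icc (max lo₁ (lo₂ + d)) (min hi₁ (hi₂ + d))) ≤ diffCount (Icc lo₁ hi₁) (Icc lo₂ hi₂) d := by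
  refine card_le_card_of_injOn (fun r => (r, r - d)) (fun r hr => ?_)
    fun r _ r' _ h => congrArg Prod.fst h
  simp only [coe_Icc, Set.mem_Icc, max_le_iff, le_min_iff] at hr
  simp only [coe_filter, mem_product, mem_Icc]
  exact ⟨⟨⟨hr.1.1, hr.2.1⟩, by omega, by omega⟩, by ring⟩

lemma min_le_card_filter_lt_diffCount_plusSegment (t : ℕ) {θ i j : ℕ} (hi : θ ≤ i) (hj : θ ≤ j) :
    min (2 * t + 1) (i + j + 1 - 2 * θ) ≤
      #{d ∈ Icc (-(t : ℤ)) t | θ < diffCount (plusSegment i) (plusSegment j) d} := by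
  set lo₁ : ℤ := -((i / 2 : ℕ) : ℤ)
  set hi₁ : ℤ := (((i + 1) / 2 : ℕ) : ℤ)
  set lo₂ : ℤ := -((j / 2 : ℕ) : ℤ)
  set hi₂ : ℤ := (((j + 1) / 2 : ℕ) : ℤ)
  have hsub : Icc (max (lo₁ - hi₂ + θ) (-(t : ℤ))) (min (hi₁ - lo₂ - θ) t) ⊆
      (Icc (-(t : ℤ)) t).filter fun d => θ < diffCount (plusSegment i) (plusSegment j) d := by
    intro d hd
    simp only [mem_Icc, max_le_iff, le_min_iff] at hd
    have h : #(Icc (max lo₁ (lo₂ + d)) (min hi₁ (hi₂ + d))) ≤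
        diffCount (plusSegment i) (plusSegment j) d := card_Icc_le_diffCount lo₁ hi₁ lo₂ hi₂ d
    rw [Int.card_Icc] at h
    rw [mem_filter, mem_Icc]
    omega
  have h := card_le_card hsub
  rw [Int.card_Icc] at h
  omega

lemma pairBound_le_pairCount_plusSegment (t i j : ℕ) :
    pairBound t (i + 1) (j + 1) ≤ pairCount t (plusSegment i) (plusSegment j) := by
  set R := diffCount (plusSegment i) (plusSegment j)
  calc pairBound t (i + 1) (j + 1)
      = ∑ θ ∈ range (min (i + 1) (j + 1)), min (2 * t + 1) (i + j + 1 - 2 * θ) := by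
        simp only [pairBound, show i + 1 + (j + 1) - 1 = i + j + 1 by omega]
    _ ≤ ∑ θ ∈ range (min (i + 1) (j + 1)), #{d ∈ Icc (-(t : ℤ)) t | θ < R d} :=
        sum_le_sum fun θ hθ => by
          simp only [mem_range] at hθ
          exact min_le_card_filter_lt_diffCount_plusSegment t (by omega) (by omega)
    _ = ∑ d ∈ Icc (-(t : ℤ)) t, min (R d) (min (i + 1) (j + 1)) :=
        (sum_min_eq_sum_card_filter_lt _ _ _).symm
    _ ≤ ∑ d ∈ Icc (-(t : ℤ)) t, R d := sum_le_sum fun d _ => min_le_left _ _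
    _ = pairCount t (plusSegment i) (plusSegment j) := (pairCount_eq_sum_diffCount t _ _).symm

theorem pairCount_le_pairCount_plusSegment (t : ℕ) {A B : Finset ℤ} {i j : ℕ} (hA : #A = i + 1)
    (hB : #B = j + 1) : pairCount t A B ≤ pairCount t (plusSegment i) (plusSegment j) :=
  calc pairCount t A B ≤ pairBound t (i + 1) (j + 1) := hA ▸ hB ▸ pairCount_le_pairBound t A B
    _ ≤ _ := pairBound_le_pairCount_plusSegment t i j

lemma sum_mul_eq_of_eq_sum_ite_mem {α ι : Type*} [DecidableEq α] {I : Finset α} (f u : α → ℝ)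
    {J : Finset ι} {w : ι → ℝ} {A : ι → Finset α} (hA : ∀ j ∈ J, A j ⊆ I)
    (hu : ∀ r ∈ I, u r = ∑ j ∈ J, if r ∈ A j then w j else 0) :
    ∑ r ∈ I, f r * u r = ∑ j ∈ J, w j * ∑ r ∈ A j, f r := by
  calc ∑ r ∈ I, f r * u r = ∑ r ∈ I, ∑ j ∈ J, if r ∈ A j then w j * f r else 0 := by
        refine sum_congr rfl fun r hr => ?_
        rw [hu r hr, mul_sum]
        exact sum_congr rfl fun j _ => by split_ifs <;> ring
    _ = ∑ j ∈ J, w j * ∑ r ∈ A j, f r := by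
        rw [sum_comm]
        refine sum_congr rfl fun j hj => ?_
        rw [sum_ite_mem, inter_eq_right.2 (hA j hj), mul_sum]

lemma sum_sum_mul_mul_eq_of_eq_sum_ite_mem {α ι κ : Type*} [DecidableEq α] {I : Finset α}
    (K : α → α → ℝ) (u v : α → ℝ) {J : Finset ι} {L : Finset κ} {w : ι → ℝ} {w' : κ → ℝ}
    {A : ι → Finset α} {B : κ → Finset α} (hA : ∀ j ∈ J, A j ⊆ I) (hB : ∀ l ∈ L, B l ⊆ I)
    (hu : ∀ r ∈ I, u r = ∑ j ∈ J, if r ∈ A j then w j else 0)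
    (hv : ∀ s ∈ I, v s = ∑ l ∈ L, if s ∈ B l then w' l else 0) :
    ∑ r ∈ I, ∑ s ∈ I, K r s * u r * v s =
      ∑ j ∈ J, ∑ l ∈ L, w j * w' l * ∑ r ∈ A j, ∑ s ∈ B l, K r s := by
  have hinner : ∀ r, ∑ s ∈ I, K r s * v s = ∑ l ∈ L, w' l * ∑ s ∈ B l, K r s := fun r =>
    sum_mul_eq_of_eq_sum_ite_mem (K r) v hB hv
  calc ∑ r ∈ I, ∑ s ∈ I, K r s * u r * v s = ∑ r ∈ I, (∑ s ∈ I, K r s * v s) * u r := by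
        simp_rw [sum_mul]
        exact sum_congr rfl fun r _ => sum_congr rfl fun s _ => by ring
    _ = ∑ j ∈ J, w j * ∑ r ∈ A j, ∑ l ∈ L, w' l * ∑ s ∈ B l, K r s := by
        simp_rw [hinner]
        exact sum_mul_eq_of_eq_sum_ite_mem _ u hA hu
    _ = _ := by
        simp_rw [mul_sum, mul_assoc]
        exact sum_congr rfl fun j _ => sum_comm

lemma natCast_pairCount (t : ℕ) (A B : Finset ℤ) :
    (pairCount t A B : ℝ) = ∑ r ∈ A, ∑ s ∈ B, if |r - s| ≤ t then (1 : ℝ) else 0 := by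
  rw [pairCount, card_filter, sum_product]
  push_cast
  rfl

lemma sum_sum_eq_sum_layerWeight_mul_pairCount (c : ℤ → ℝ) (hc : ∀ j, c (-j) = c j) {n : ℕ}
    {A B : Finset ℤ} (hAB : ∀ r ∈ A, ∀ s ∈ B, |r - s| ≤ n) :
    ∑ r ∈ A, ∑ s ∈ B, c (r - s) =
      ∑ t ∈ range (n + 1), layerWeight n (fun t => c t) t * pairCount t A B := by
  calc ∑ r ∈ A, ∑ s ∈ B, c (r - s)
      = ∑ r ∈ A, ∑ s ∈ B, ∑ t ∈ range (n + 1),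
          layerWeight n (fun t => c t) t * if |r - s| ≤ t then 1 else 0 :=
        sum_congr rfl fun r hr => sum_congr rfl fun s hs => by
          rw [eq_sum_layerWeight_abs c hc (hAB r hr s hs)]
          simp only [mul_ite, mul_one, mul_zero]
    _ = _ := by
        simp_rw [natCast_pairCount, mul_sum]
        conv_rhs => rw [sum_comm]
        exact sum_congr rfl fun r _ => sum_comm

lemma map_plusSegment_subset {k j : ℕ} (hj : j ≤ 2 * k) {σ : Equiv.Perm ℤ}
    (hσ : ∀ i, i ∈ Icc (-(k : ℤ)) k ↔ σ i ∈ Icc (-(k : ℤ)) k) :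
    (plusSegment j).map σ.symm.toEmbedding ⊆ Icc (-(k : ℤ)) k := fun r hr => by
  rw [mem_map_equiv, Equiv.symm_symm] at hr
  rw [hσ, ← plusSegment_two_mul]
  exact plusSegment_mono hj hr

theorem bilinear_form_eq_sum_pairCount {k : ℕ} (c x y : ℤ → ℝ) (hc : ∀ j, c (-j) = c j)
    {σ τ : Equiv.Perm ℤ} (hσ : ∀ i, i ∈ Icc (-(k : ℤ)) k ↔ σ i ∈ Icc (-(k : ℤ)) k)
    (hτ : ∀ i, i ∈ Icc (-(k : ℤ)) k ↔ τ i ∈ Icc (-(k : ℤ)) k) :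
    ∑ r ∈ Icc (-(k : ℤ)) k, ∑ s ∈ Icc (-(k : ℤ)) k, c (r - s) * x (σ r) * y (τ s) =
      ∑ j ∈ range (2 * k + 1), ∑ l ∈ range (2 * k + 1),
        layerWeight (2 * k) (x ∘ plusEnum) j * layerWeight (2 * k) (y ∘ plusEnum) l *
          ∑ t ∈ range (2 * k + 1), layerWeight (2 * k) (fun t => c t) t *
            pairCount t ((plusSegment j).map σ.symm.toEmbedding)
              ((plusSegment l).map τ.symm.toEmbedding) := by
  have hA : ∀ j ∈ range (2 * k + 1), (plusSegment j).map σ.symm.toEmbedding ⊆ Icc (-(k : ℤ)) k :=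
    fun j hj => map_plusSegment_subset (Nat.le_of_lt_succ (mem_range.1 hj)) hσ
  have hB : ∀ l ∈ range (2 * k + 1), (plusSegment l).map τ.symm.toEmbedding ⊆ Icc (-(k : ℤ)) k :=
    fun l hl => map_plusSegment_subset (Nat.le_of_lt_succ (mem_range.1 hl)) hτ
  refine (sum_sum_mul_mul_eq_of_eq_sum_ite_mem (fun r s => c (r - s)) (x ∘ σ) (y ∘ τ) hA hB
    (fun r hr => apply_eq_sum_layerWeight x σ (plusSegment_two_mul k ▸ (hσ r).1 hr))
    (fun s hs => apply_eq_sum_layerWeight y τ (plusSegment_two_mul k ▸ (hτ s).1 hs))).trans ?_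
  refine sum_congr rfl fun j hj => sum_congr rfl fun l hl => ?_
  congr 1
  refine sum_sum_eq_sum_layerWeight_mul_pairCount c hc fun r hr s hs => ?_
  have hr' := mem_Icc.1 (hA j hj hr)
  have hs' := mem_Icc.1 (hB l hl hs)
  rw [abs_le]
  omega

/-- Hardy–Littlewood–Pólya, Theorem 371: if `c` is a non-negative symmetrically decreasing
sequence and `x`, `y` are non-negative sequences on `{-k,…,k}` arranged in the `+` order, then
any rearrangement of `x` and `y` does not increase the bilinear form
`∑_{r=-k}^{k} ∑_{s=-k}^{k} c_{r-s} x_r y_s`; i.e. the form is maximized at the `+` order. -/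
theorem bilinear_form_max_plus_order (k : ℕ) (c x y : ℤ → ℝ)
    (hc0 : ∀ j, 0 ≤ c j)
    (hcsymm : ∀ j, c (-j) = c j)
    (hcdec : ∀ i j : ℕ, i ≤ j → c (j : ℤ) ≤ c (i : ℤ))
    (hx0 : ∀ i, 0 ≤ x i) (hy0 : ∀ i, 0 ≤ y i)
    (hx : PlusArranged k x) (hy : PlusArranged k y)
    (σ τ : Equiv.Perm ℤ)
    (hσ : ∀ i, i ∈ Finset.Icc (-(k : ℤ)) (k : ℤ) ↔ σ i ∈ Finset.Icc (-(k : ℤ)) (k : ℤ))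
    (hτ : ∀ i, i ∈ Finset.Icc (-(k : ℤ)) (k : ℤ) ↔ τ i ∈ Finset.Icc (-(k : ℤ)) (k : ℤ)) :
    ∑ r ∈ Finset.Icc (-(k : ℤ)) (k : ℤ), ∑ s ∈ Finset.Icc (-(k : ℤ)) (k : ℤ),
        c (r - s) * x (σ r) * y (τ s) ≤
      ∑ r ∈ Finset.Icc (-(k : ℤ)) (k : ℤ), ∑ s ∈ Finset.Icc (-(k : ℤ)) (k : ℤ),
        c (r - s) * x r * y s := by
  have hid := bilinear_form_eq_sum_pairCount (k := k) c x y hcsymm (σ := Equiv.refl ℤ)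
    (τ := Equiv.refl ℤ) (fun _ => Iff.rfl) (fun _ => Iff.rfl)
  simp only [Equiv.refl_apply, Equiv.refl_symm, Equiv.refl_toEmbedding, map_refl] at hid
  rw [bilinear_form_eq_sum_pairCount c x y hcsymm hσ hτ, hid]
  gcongr with j _ l _ t
  · exact mul_nonneg (hx.layerWeight_comp_plusEnum_nonneg hx0 j)
      (hy.layerWeight_comp_plusEnum_nonneg hy0 l)
  · exact layerWeight_nonneg (fun j _ => hcdec j (j + 1) j.le_succ) (hc0 _) t
  · exact pairCount_le_pairCount_plusSegment t (by rw [card_map, card_plusSegment])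
      (by rw [card_map, card_plusSegment])
end

section
/- For a unicyclic graph G with cycle C, the centroid M(G) (the subgraph induced by vertices u minimizing D_G(u)) is either a single vertex (K_1), or an edge (K_2), or a subgraph of the cycle C. -/
open SimpleGraph Finset

/-!
Let `u` be a centroid vertex lying on no cycle, and for `w ≠ u` let `B` be the branch of `G` at `u`
containing `w` (the vertices reachable from `w` avoiding `u`). Every path from `B` to its complement
passes through `u`, and `B` contains exactly one neighbour `v` of `u`, through which all shortest
paths from `u` into `B` run. Hence `D(v) + |B| ≤ D(u) + |Bᶜ|`, so `|B| ≤ |Bᶜ|` by minimality at `u`;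
and `D(u) + |Bᶜ| d(u,w) ≤ D(w) + |B| d(u,w)`, strictly unless `w = v`. If `w` is in the centroid as
well, both together force `w = v` and `|B| = |Bᶜ|`. Branches at `u` through distinct neighbours are
disjoint and miss `u`, so at most one such `w` exists: the centroid is then `{u}` or the edge `uw`.
-/

namespace Finset

variable {ι M : Type*} [Fintype ι] [DecidableEq ι] [AddCommMonoid M]

theorem sum_add_card_compl_nsmul_eq (s : Finset ι) {f g : ι → M} {c : M}
    (hsc : ∀ i ∉ s, g i = f i + c) :
    ∑ i, f i + #sᶜ • c = ∑ i ∈ s, f i + ∑ i ∈ sᶜ, g i := by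
  rw [← sum_add_sum_compl s f, add_assoc, ← sum_const, ← sum_add_distrib]
  exact congrArg _ (sum_congr rfl fun i hi => (hsc i (mem_compl.1 hi)).symm)

variable [PartialOrder M]

theorem sum_add_card_compl_nsmul_le [IsOrderedAddMonoid M] (s : Finset ι) {f g : ι → M} {c : M}
    (hs : ∀ i ∈ s, f i ≤ g i + c) (hsc : ∀ i ∉ s, g i = f i + c) :
    ∑ i, f i + #sᶜ • c ≤ ∑ i, g i + #s • c := by
  rw [sum_add_card_compl_nsmul_eq s hsc, ← sum_add_sum_compl s g, add_right_comm, ← sum_const,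
    ← sum_add_distrib]
  exact add_le_add_left (sum_le_sum hs) _

theorem sum_add_card_compl_nsmul_lt [IsOrderedCancelAddMonoid M] (s : Finset ι) {f g : ι → M}
    {c : M} (hs : ∀ i ∈ s, f i ≤ g i + c) (hlt : ∃ i ∈ s, f i < g i + c)
    (hsc : ∀ i ∉ s, g i = f i + c) :
    ∑ i, f i + #sᶜ • c < ∑ i, g i + #s • c := by
  rw [sum_add_card_compl_nsmul_eq s hsc, ← sum_add_sum_compl s g, add_right_comm, ← sum_const,
    ← sum_add_distrib]
  exact add_lt_add_left (sum_lt_sum hs hlt) _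

end Finset

namespace SimpleGraph

variable {V : Type*} {G : SimpleGraph V} {u v w x : V}

theorem exists_isCycle_of_walk_notMem_support {v₁ v₂ : V} (h₁ : G.Adj u v₁) (h₂ : G.Adj u v₂)
    (hne : v₁ ≠ v₂) (p : G.Walk v₁ v₂) (hp : u ∉ p.support) : ∃ c : G.Walk u u, c.IsCycle := by
  classical
  refine ⟨.cons h₁ (p.concat h₂.symm).toPath, Path.cons_isCycle _ _ fun he => ?_⟩
  have he' := Walk.edges_toPath_subset_edges _ he
  rw [Walk.edges_concat, List.concat_eq_append, List.mem_append, List.mem_singleton] at he'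
  rcases he' with he' | he'
  · exact hp (p.fst_mem_support_of_mem_edges he')
  · rw [Sym2.eq_iff] at he'
    rcases he' with ⟨rfl, -⟩ | ⟨-, rfl⟩
    · exact G.loopless.irrefl _ h₂
    · exact hne rfl

theorem Connected.dist_eq_add_of_forall_mem_support (hconn : G.Connected)
    (h : ∀ p : G.Walk v w, u ∈ p.support) : G.dist v w = G.dist v u + G.dist u w := by
  classical
  refine le_antisymm hconn.dist_triangle ?_
  obtain ⟨p, hp⟩ := hconn.exists_walk_length_eq_dist v w
  calc G.dist v u + G.dist u w
      ≤ (p.takeUntil u (h p)).length + (p.dropUntil u (h p)).length :=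
        add_le_add (dist_le _) (dist_le _)
    _ = G.dist v w := by rw [← Walk.length_append, Walk.take_spec, hp]

section Branch

variable [Fintype V]

noncomputable def branch (G : SimpleGraph V) (u v : V) : Finset V := by
  classical exact univ.filter fun x => ∃ p : G.Walk v x, u ∉ p.support

theorem mem_branch : x ∈ G.branch u v ↔ ∃ p : G.Walk v x, u ∉ p.support := by
  classical simp [branch]

theorem notMem_branch : u ∉ G.branch u v :=
  fun h => (mem_branch.1 h).elim fun p hp => hp p.end_mem_support

theorem self_mem_branch (h : v ≠ u) : v ∈ G.branch u v :=
  mem_branch.2 ⟨.nil, by simpa using h.symm⟩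

theorem mem_branch_of_walk (hw : w ∈ G.branch u v) (q : G.Walk w x) (hq : u ∉ q.support) :
    x ∈ G.branch u v := by
  obtain ⟨p, hp⟩ := mem_branch.1 hw
  exact mem_branch.2 ⟨p.append q, by simp [Walk.mem_support_append_iff, hp, hq]⟩

theorem Connected.dist_eq_add_of_mem_branch_of_notMem (hconn : G.Connected)
    (hw : w ∈ G.branch u v) (hx : x ∉ G.branch u v) : G.dist w x = G.dist w u + G.dist u x :=
  hconn.dist_eq_add_of_forall_mem_support fun p => by
    by_contra hp
    exact hx (mem_branch_of_walk hw p hp)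

theorem Connected.dist_eq_add_dist_of_notMem_branch (hconn : G.Connected) (hwu : w ≠ u)
    (hx : x ∉ G.branch u w) : G.dist w x = G.dist u x + G.dist u w := by
  rw [hconn.dist_eq_add_of_mem_branch_of_notMem (self_mem_branch hwu) hx, dist_comm, add_comm]

theorem Connected.exists_adj_mem_branch (hconn : G.Connected) (hx : x ∈ G.branch u v) :
    ∃ v', G.Adj u v' ∧ v' ∈ G.branch u v ∧ G.dist u x = G.dist v' x + 1 := by
  have hux : u ≠ x := by rintro rfl; exact notMem_branch hx
  obtain ⟨p, hpath, hlen⟩ := hconn.exists_path_of_dist u x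
  obtain ⟨v', hadj, q, rfl⟩ := Walk.exists_eq_cons_of_ne hux p
  rw [Walk.cons_isPath_iff] at hpath
  refine ⟨v', hadj, mem_branch_of_walk hx q.reverse (by simpa using hpath.2), ?_⟩
  refine le_antisymm ?_ ?_
  · calc G.dist u x ≤ G.dist u v' + G.dist v' x := hconn.dist_triangle
      _ = G.dist v' x + 1 := by rw [dist_eq_one_iff_adj.2 hadj, add_comm]
  · rw [← hlen, Walk.length_cons]
    exact Nat.add_le_add_right (dist_le q) 1

variable (hcyc : ∀ c : G.Walk u u, ¬c.IsCycle)
include hcyc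

theorem eq_of_adj_of_mem_branch {v₁ v₂ : V} (h₁ : G.Adj u v₁) (h₂ : G.Adj u v₂)
    (hv₁ : v₁ ∈ G.branch u v) (hv₂ : v₂ ∈ G.branch u v) : v₁ = v₂ := by
  by_contra hne
  obtain ⟨p₁, hp₁⟩ := mem_branch.1 hv₁
  obtain ⟨p₂, hp₂⟩ := mem_branch.1 hv₂
  obtain ⟨c, hc⟩ := exists_isCycle_of_walk_notMem_support h₁ h₂ hne (p₁.reverse.append p₂)
    (by simp [Walk.mem_support_append_iff, hp₁, hp₂])
  exact hcyc c hc

theorem disjoint_branch {v₁ v₂ : V} (h₁ : G.Adj u v₁) (h₂ : G.Adj u v₂) (hne : v₁ ≠ v₂) :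
    Disjoint (G.branch u v₁) (G.branch u v₂) := by
  refine Finset.disjoint_left.2 fun x hx₁ hx₂ => ?_
  obtain ⟨p₁, hp₁⟩ := mem_branch.1 hx₁
  obtain ⟨p₂, hp₂⟩ := mem_branch.1 hx₂
  obtain ⟨c, hc⟩ := exists_isCycle_of_walk_notMem_support h₁ h₂ hne (p₁.append p₂.reverse)
    (by simp [Walk.mem_support_append_iff, hp₁, hp₂])
  exact hcyc c hc

theorem Connected.dist_eq_dist_add_one_of_mem_branch (hconn : G.Connected) (hadj : G.Adj u w)
    (hw : w ∈ G.branch u v) (hx : x ∈ G.branch u v) : G.dist u x = G.dist w x + 1 := by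
  obtain ⟨v', hadj', hv', hdist⟩ := hconn.exists_adj_mem_branch hx
  rwa [eq_of_adj_of_mem_branch hcyc hadj' hadj hv' hw] at hdist

end Branch

section Centroid

variable [Fintype V]

noncomputable def distSum (G : SimpleGraph V) (u : V) : ℕ := ∑ x, G.dist u x

noncomputable def centroid (G : SimpleGraph V) : Finset V :=
  univ.filter fun u => ∀ w, G.distSum u ≤ G.distSum w

theorem mem_centroid : u ∈ G.centroid ↔ ∀ w, G.distSum u ≤ G.distSum w := by
  simp [centroid]

variable [DecidableEq V]

theorem Connected.distSum_add_card_compl_mul_le (hconn : G.Connected) (hwu : w ≠ u) :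
    G.distSum u + #(G.branch u w)ᶜ * G.dist u w ≤ G.distSum w + #(G.branch u w) * G.dist u w := by
  simpa only [distSum, smul_eq_mul] using sum_add_card_compl_nsmul_le (G.branch u w)
    (fun x _ => by rw [add_comm]; exact hconn.dist_triangle)
    (fun x hx => hconn.dist_eq_add_dist_of_notMem_branch hwu hx)

theorem Connected.distSum_add_card_compl_mul_lt (hconn : G.Connected) (hwu : w ≠ u)
    (hlt : ∃ x ∈ G.branch u w, G.dist u x < G.dist w x + G.dist u w) :
    G.distSum u + #(G.branch u w)ᶜ * G.dist u w < G.distSum w + #(G.branch u w) * G.dist u w := by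
  simpa only [distSum, smul_eq_mul] using sum_add_card_compl_nsmul_lt (G.branch u w)
    (fun x _ => by rw [add_comm]; exact hconn.dist_triangle) hlt
    (fun x hx => hconn.dist_eq_add_dist_of_notMem_branch hwu hx)

theorem Connected.card_compl_branch_le_card_branch (hconn : G.Connected) (hwu : w ≠ u)
    (hw : G.distSum w ≤ G.distSum u) : #(G.branch u w)ᶜ ≤ #(G.branch u w) := by
  have hpos : 0 < G.dist u w := hconn.pos_dist_of_ne hwu.symm
  have := hconn.distSum_add_card_compl_mul_le hwu
  exact Nat.le_of_mul_le_mul_right (by omega) hpos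

variable (hcyc : ∀ c : G.Walk u u, ¬c.IsCycle)
include hcyc

theorem Connected.card_branch_le_card_compl_branch (hconn : G.Connected) (hu : u ∈ G.centroid)
    (hadj : G.Adj u v) (hv : v ∈ G.branch u w) : #(G.branch u w) ≤ #(G.branch u w)ᶜ := by
  have key := sum_add_card_compl_nsmul_le (G.branch u w)ᶜ (f := G.dist v) (g := G.dist u) (c := 1)
    (fun x _ => by
      calc G.dist v x ≤ G.dist v u + G.dist u x := hconn.dist_triangle
        _ = G.dist u x + 1 := by rw [dist_comm, dist_eq_one_iff_adj.2 hadj, add_comm])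
    (fun x hx => hconn.dist_eq_dist_add_one_of_mem_branch hcyc hadj hv (notMem_compl.1 hx))
  rw [compl_compl, smul_eq_mul, smul_eq_mul, mul_one, mul_one] at key
  have := mem_centroid.1 hu v
  unfold distSum at this
  omega

theorem Connected.adj_of_mem_centroid (hconn : G.Connected) (hu : u ∈ G.centroid)
    (hw : w ∈ G.centroid) (hwu : w ≠ u) : G.Adj u w := by
  obtain ⟨v, hadj, hv, hdist⟩ := hconn.exists_adj_mem_branch (self_mem_branch hwu)
  obtain rfl : v = w := by
    by_contra hvw
    have hle := hconn.card_branch_le_card_compl_branch hcyc hu hadj hv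
    have hlt := hconn.distSum_add_card_compl_mul_lt hwu ⟨v, hv, by
      rw [dist_eq_one_iff_adj.2 hadj]
      have := hconn.pos_dist_of_ne (Ne.symm hvw)
      omega⟩
    have := Nat.mul_le_mul_right (G.dist u w) hle
    have := mem_centroid.1 hw u
    omega
  exact hadj

theorem Connected.card_branch_lt_card_branch (hconn : G.Connected) (hu : u ∈ G.centroid)
    {w₁ w₂ : V} (hw₁ : w₁ ∈ G.centroid) (hw₂ : w₂ ∈ G.centroid) (hw₁u : w₁ ≠ u) (hw₂u : w₂ ≠ u)
    (hne : w₁ ≠ w₂) : #(G.branch u w₁) < #(G.branch u w₂) := by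
  have hdisj := disjoint_branch hcyc (hconn.adj_of_mem_centroid hcyc hu hw₁ hw₁u)
    (hconn.adj_of_mem_centroid hcyc hu hw₂ hw₂u) hne
  have hsub : G.branch u w₁ ⊂ (G.branch u w₂)ᶜ :=
    (ssubset_iff_of_subset (subset_compl_iff_disjoint_right.2 hdisj)).2
      ⟨u, mem_compl.2 notMem_branch, notMem_branch⟩
  exact (card_lt_card hsub).trans_le
    (hconn.card_compl_branch_le_card_branch hw₂u (mem_centroid.1 hw₂ u))

theorem Connected.centroid_eq_pair (hconn : G.Connected) (hu : u ∈ G.centroid)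
    (hw : w ∈ G.centroid) (hwu : w ≠ u) : G.centroid = {u, w} := by
  ext z
  simp only [mem_insert, mem_singleton]
  refine ⟨fun hz => ?_, by rintro (rfl | rfl) <;> assumption⟩
  by_contra! h
  exact lt_asymm (hconn.card_branch_lt_card_branch hcyc hu hz hw h.1 hwu h.2)
    (hconn.card_branch_lt_card_branch hcyc hu hw hz hwu h.1 h.2.symm)

end Centroid

end SimpleGraph

theorem centroid_unicyclic_general {V : Type*} [Fintype V] [DecidableEq V]
    (G : SimpleGraph V)
    (hconn : G.Connected) :
    (Finset.univ.filter fun u : V =>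
        ∀ w : V, ∑ x : V, G.dist u x ≤ ∑ x : V, G.dist w x).card = 1 ∨
    (∃ a b : V, G.Adj a b ∧
      (Finset.univ.filter fun u : V =>
        ∀ w : V, ∑ x : V, G.dist u x ≤ ∑ x : V, G.dist w x) = {a, b}) ∨
    (∀ u ∈ Finset.univ.filter fun u : V =>
        ∀ w : V, ∑ x : V, G.dist u x ≤ ∑ x : V, G.dist w x,
      ∃ p : G.Walk u u, p.IsCycle) := by
  by_cases hcyc : ∀ u ∈ G.centroid, ∃ p : G.Walk u u, p.IsCycle
  · exact Or.inr (Or.inr hcyc)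
  push Not at hcyc
  obtain ⟨u, hu, hcyc⟩ := hcyc
  by_cases hw : ∃ w ∈ G.centroid, w ≠ u
  · obtain ⟨w, hw, hwu⟩ := hw
    exact Or.inr (Or.inl ⟨u, w, hconn.adj_of_mem_centroid hcyc hu hw hwu,
      hconn.centroid_eq_pair hcyc hu hw hwu⟩)
  · push Not at hw
    exact Or.inl (card_eq_one.2 ⟨u, eq_singleton_iff_unique_mem.2 ⟨hu, hw⟩⟩)

/-- For a unicyclic graph `G` (connected with as many edges as vertices), the centroid —
the set of vertices `u` minimizing `D_G(u) = ∑_v d_G(u,v)` — is a single vertex (`K_1`),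
or the two endpoints of an edge (`K_2`), or is contained in the unique cycle of `G`
(every centroid vertex lies on a cycle). -/
theorem centroid_unicyclic {V : Type*} [Fintype V] [DecidableEq V]
    (G : SimpleGraph V) [DecidableRel G.Adj]
    (hconn : G.Connected) (hedges : G.edgeFinset.card = Fintype.card V) :
    (Finset.univ.filter fun u : V =>
        ∀ w : V, ∑ x : V, G.dist u x ≤ ∑ x : V, G.dist w x).card = 1 ∨
    (∃ a b : V, G.Adj a b ∧
      (Finset.univ.filter fun u : V =>
        ∀ w : V, ∑ x : V, G.dist u x ≤ ∑ x : V, G.dist w x) = {a, b}) ∨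
    (∀ u ∈ Finset.univ.filter fun u : V =>
        ∀ w : V, ∑ x : V, G.dist u x ≤ ∑ x : V, G.dist w x,
      ∃ p : G.Walk u u, p.IsCycle) :=
  centroid_unicyclic_general G hconn
end
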